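/- Let A be a randomized mechanism satisfying kε-differential privacy at the word level, i.e., for any two inputs x₁, x₂ differing in exactly one coordinate and any event S, Pr[A(x₁) = S] ≤ e^{kε} Pr[A(x₂) = S]. Apply random coordinate-wise dropout I_n where each coordinate is zeroed independently with probability μ ∈ [0,1], producing x̃ = x ⊙ I_n. Then the composed mechanism x ↦ A(x ⊙ I_n) satisfies ε'-word-level DP with ε' = ln((1-μ)·e^{kε} + μ). -/

import Mathlib

/-! Split the dropout pattern at the coordinate `i` where the two inputs differ. If `i` is
dropped, both inputs are masked to the same vector, with output probability `b`; if `i` is kept,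
the masked inputs `x₁'`, `x₂'` are adjacent, and `x₁'` is equal or adjacent to the masked input
with `i` dropped. So, for every pattern of the other coordinates, `A x₁' S ≤ e^{kε} · min(A x₂' S, b)`,
and the two conditional mixtures `(1-μ)·A x₁' S + μ·b` and `(1-μ)·A x₂' S + μ·b` then differ by
at most the factor `(1-μ)·e^{kε} + μ`. -/

open MeasureTheory Finset

/-- Two vectors are word-adjacent if they differ in exactly one coordinate. -/
def AdjOne {d : ℕ} (x₁ x₂ : Fin d → ℝ) : Prop :=
  ∃ i, x₁ i ≠ x₂ i ∧ ∀ j, j ≠ i → x₁ j = x₂ j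

/-- The mechanism obtained by first applying coordinate-wise i.i.d. dropout with
rate `μ` (each coordinate zeroed with probability `μ`) and then running `A`:
the output distribution is the mixture over dropout patterns. -/
noncomputable def dropoutMechanism {d : ℕ} {Ω : Type*} [MeasurableSpace Ω]
    (A : (Fin d → ℝ) → Measure Ω) (μ : ℝ) (x : Fin d → ℝ) : Measure Ω :=
  ∑ I : Fin d → Bool,
    (∏ i, if I i then ENNReal.ofReal (1 - μ) else ENNReal.ofReal μ) •
      A (fun i => if I i then x i else 0)

open scoped ENNReal

theorem ENNReal.mixture_le_mul_mixture {p m E a₁ a₂ b : ℝ≥0∞} (hpm : p + m = 1) (hE : 1 ≤ E)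
    (ha : a₁ ≤ E * a₂) (hb : a₁ ≤ E * b) :
    p * a₁ + m * b ≤ (p * E + m) * (p * a₂ + m * b) := by
  rcases le_total b a₂ with hba | hab
  · calc p * a₁ + m * b ≤ (p * E + m) * b := by rw [add_mul, mul_assoc]; gcongr
      _ ≤ (p * E + m) * (p * a₂ + m * b) := by
          gcongr
          calc b = (p + m) * b := by rw [hpm, one_mul]
            _ ≤ p * a₂ + m * b := by rw [add_mul]; gcongr
  · obtain ⟨c, rfl⟩ : ∃ c, b = a₂ + c := ⟨b - a₂, (add_tsub_cancel_of_le hab).symm⟩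
    have hmix : p * a₂ + m * (a₂ + c) = a₂ + m * c := by
      rw [mul_add, ← add_assoc, ← add_mul, hpm, one_mul]
    have hp : p ≤ p * E := le_mul_of_one_le_right' hE
    calc p * a₁ + m * (a₂ + c) ≤ p * E * a₂ + m * a₂ + (p + m) * (m * c) := by
          rw [hpm, one_mul, mul_add, ← add_assoc, mul_assoc]; gcongr
      _ ≤ (p * E + m) * (a₂ + m * c) := by rw [mul_add, add_mul (p * E) m a₂]; gcongr
      _ = (p * E + m) * (p * a₂ + m * (a₂ + c)) := by rw [hmix]

section SplitAt

variable {ι β : Type*} [DecidableEq ι] (i : ι) (b : β) (g : {j // j ≠ i} → β)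

@[simp]
theorem Equiv.funSplitAt_symm_apply_self : (Equiv.funSplitAt i β).symm (b, g) i = b := by
  simp [Equiv.funSplitAt, Equiv.piSplitAt]

theorem Equiv.funSplitAt_symm_apply_of_ne {j : ι} (hj : j ≠ i) :
    (Equiv.funSplitAt i β).symm (b, g) j = g ⟨j, hj⟩ := by
  simp [Equiv.funSplitAt, Equiv.piSplitAt, hj]

variable [Fintype ι]

theorem Fintype.prod_funSplitAt_symm {M : Type*} [CommMonoid M] (w : ι → β → M) :
    ∏ j, w j ((Equiv.funSplitAt i β).symm (b, g) j) = w i b * ∏ j : {j // j ≠ i}, w j (g j) := by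
  rw [Fintype.prod_eq_mul_prod_subtype_ne _ i, Equiv.funSplitAt_symm_apply_self]
  congr 1
  exact Fintype.prod_congr _ _ fun j => by rw [Equiv.funSplitAt_symm_apply_of_ne i b g j.2]

theorem Fintype.sum_bool_fun_eq_sum_funSplitAt {M : Type*} [AddCommMonoid M]
    (f : (ι → Bool) → M) :
    ∑ I, f I = ∑ g : {j // j ≠ i} → Bool,
      (f ((Equiv.funSplitAt i Bool).symm (true, g)) +
        f ((Equiv.funSplitAt i Bool).symm (false, g))) := by
  rw [← (Equiv.funSplitAt i Bool).symm.sum_comp, Fintype.sum_prod_type, Fintype.sum_bool,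
    Finset.sum_add_distrib]

end SplitAt

section Dropout

def dropout {ι : Type*} (I : ι → Bool) (x : ι → ℝ) : ι → ℝ := fun j => if I j then x j else 0

variable {ι : Type*} [DecidableEq ι] (i : ι) (g : {j // j ≠ i} → Bool) {x y : ι → ℝ}

theorem dropout_funSplitAt_symm_apply_of_ne (b b' : Bool) {j : ι} (hj : j ≠ i)
    (hxy : x j = y j) :
    dropout ((Equiv.funSplitAt i Bool).symm (b, g)) x j =
      dropout ((Equiv.funSplitAt i Bool).symm (b', g)) y j := by
  simp only [dropout, Equiv.funSplitAt_symm_apply_of_ne i _ g hj, hxy]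

theorem dropout_funSplitAt_symm_false_congr (h : ∀ j, j ≠ i → x j = y j) :
    dropout ((Equiv.funSplitAt i Bool).symm (false, g)) x =
      dropout ((Equiv.funSplitAt i Bool).symm (false, g)) y := by
  funext j
  by_cases hj : j = i
  · simp [dropout, hj]
  · exact dropout_funSplitAt_symm_apply_of_ne i g false false hj (h j hj)

end Dropout

section DropoutMechanism

variable {d : ℕ} {Ω : Type*} [MeasurableSpace Ω]

theorem dropoutMechanism_apply (A : (Fin d → ℝ) → Measure Ω) (μ : ℝ) (x : Fin d → ℝ)
    (S : Set Ω) :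
    dropoutMechanism A μ x S = ∑ I : Fin d → Bool,
      (∏ j, if I j then ENNReal.ofReal (1 - μ) else ENNReal.ofReal μ) * A (dropout I x) S := by
  simp only [dropoutMechanism, Measure.finsetSum_apply, Measure.smul_apply, smul_eq_mul]
  rfl

theorem dropoutMechanism_apply_eq_sum_funSplitAt (A : (Fin d → ℝ) → Measure Ω) (μ : ℝ)
    (x : Fin d → ℝ) (S : Set Ω) (i : Fin d) :
    dropoutMechanism A μ x S = ∑ g : {j // j ≠ i} → Bool,
      (∏ j : {j // j ≠ i}, if g j then ENNReal.ofReal (1 - μ) else ENNReal.ofReal μ) *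
        (ENNReal.ofReal (1 - μ) * A (dropout ((Equiv.funSplitAt i Bool).symm (true, g)) x) S +
          ENNReal.ofReal μ * A (dropout ((Equiv.funSplitAt i Bool).symm (false, g)) x) S) := by
  rw [dropoutMechanism_apply, Fintype.sum_bool_fun_eq_sum_funSplitAt i]
  refine Fintype.sum_congr _ _ fun g => ?_
  rw [Fintype.prod_funSplitAt_symm i true g (fun _ b => if b then _ else _),
    Fintype.prod_funSplitAt_symm i false g (fun _ b => if b then _ else _)]
  simp only [if_true, Bool.false_eq_true, if_false]
  ring

end DropoutMechanism

section Adjacency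

variable {d : ℕ}

theorem eq_or_adjOne_of_forall_ne_eq {x y : Fin d → ℝ} {i : Fin d}
    (h : ∀ j, j ≠ i → x j = y j) : x = y ∨ AdjOne x y := by
  by_cases hi : x i = y i
  · left
    funext j
    by_cases hj : j = i
    · exact hj ▸ hi
    · exact h j hj
  · exact Or.inr ⟨i, hi, h⟩

theorem le_mul_of_forall_ne_eq {Ω : Type*} [MeasurableSpace Ω] {A : (Fin d → ℝ) → Measure Ω}
    {E : ℝ≥0∞} (hDP : ∀ x₁ x₂, AdjOne x₁ x₂ → ∀ S : Set Ω, A x₁ S ≤ E * A x₂ S) (hE : 1 ≤ E)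
    {x y : Fin d → ℝ} {i : Fin d} (h : ∀ j, j ≠ i → x j = y j) (S : Set Ω) :
    A x S ≤ E * A y S := by
  rcases eq_or_adjOne_of_forall_ne_eq h with rfl | hxy
  · exact le_mul_of_one_le_left' hE
  · exact hDP _ _ hxy S

end Adjacency

theorem dropout_amplification_general {d : ℕ} {Ω : Type*} [MeasurableSpace Ω]
    (A : (Fin d → ℝ) → Measure Ω) (k : ℕ) (ε μ : ℝ) (hε : 0 < ε)
    (hμ : μ ∈ Set.Icc (0:ℝ) 1)
    (hDP : ∀ x₁ x₂, AdjOne x₁ x₂ → ∀ S : Set Ω,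
      A x₁ S ≤ ENNReal.ofReal (Real.exp (k * ε)) * A x₂ S) :
    ∀ x₁ x₂, AdjOne x₁ x₂ → ∀ S : Set Ω,
      dropoutMechanism A μ x₁ S ≤
        ENNReal.ofReal (Real.exp (Real.log ((1 - μ) * Real.exp (k * ε) + μ))) *
          dropoutMechanism A μ x₂ S := by
  rintro x₁ x₂ ⟨i, -, hoff⟩ S
  obtain ⟨hμ0, hμ1⟩ := hμ
  set P := ENNReal.ofReal (1 - μ)
  set M := ENNReal.ofReal μ
  set E := ENNReal.ofReal (Real.exp (k * ε))
  have hPM : P + M = 1 := by rw [← ENNReal.ofReal_add (by linarith) hμ0]; simp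
  have hexp : 1 ≤ Real.exp (k * ε) := Real.one_le_exp (by positivity)
  have hE : 1 ≤ E := ENNReal.one_le_ofReal.2 hexp
  have hconst : ENNReal.ofReal (Real.exp (Real.log ((1 - μ) * Real.exp (k * ε) + μ))) =
      P * E + M := by
    rw [Real.exp_log (by nlinarith), ENNReal.ofReal_add (by nlinarith) hμ0,
      ENNReal.ofReal_mul (by linarith)]
  rw [hconst, dropoutMechanism_apply_eq_sum_funSplitAt A μ x₁ S i,
    dropoutMechanism_apply_eq_sum_funSplitAt A μ x₂ S i, Finset.mul_sum]
  refine Finset.sum_le_sum fun g _ => ?_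
  rw [mul_left_comm (P * E + M), dropout_funSplitAt_symm_false_congr i g hoff]
  gcongr
  refine ENNReal.mixture_le_mul_mixture hPM hE ?_ ?_ <;>
    exact le_mul_of_forall_ne_eq hDP hE
      (fun j hj => dropout_funSplitAt_symm_apply_of_ne i g _ _ hj (hoff j hj)) S

/-- Revised Theorem 2 of Lyu et al. (privacy amplification by dropout):
if `A` is `kε`-word-level DP, then composing with dropout at rate `μ` is
`ε'`-word-level DP with `ε' = ln((1-μ)·e^{kε} + μ)`. -/
theorem dropout_amplification {d : ℕ} {Ω : Type*} [MeasurableSpace Ω]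
    (A : (Fin d → ℝ) → Measure Ω) (k : ℕ) (ε μ : ℝ) (hk : 1 ≤ k) (hε : 0 < ε)
    (hμ : μ ∈ Set.Icc (0:ℝ) 1)
    (hDP : ∀ x₁ x₂, AdjOne x₁ x₂ → ∀ S : Set Ω,
      A x₁ S ≤ ENNReal.ofReal (Real.exp (k * ε)) * A x₂ S) :
    ∀ x₁ x₂, AdjOne x₁ x₂ → ∀ S : Set Ω,
      dropoutMechanism A μ x₁ S ≤
        ENNReal.ofReal (Real.exp (Real.log ((1 - μ) * Real.exp (k * ε) + μ))) *
          dropoutMechanism A μ x₂ S :=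
  dropout_amplification_general A k ε μ hε hμ hDP
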